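/- arXiv:1203.5845 — 4 statements merged into one kernel-verified Lean document; each statement's English description precedes it below -/
import Mathlib

section
/- Let H be a real Hilbert space, let P : H → H be an orthogonal projection and Q = I − P. Let B : H → H be a bounded linear operator with B ∘ Q = Q ∘ B, ‖B‖ ≤ 1, ‖I − B‖ ≤ b, and ‖P ∘ B‖ ≤ κ. Let û, u ∈ H, let d ∈ H satisfy ‖d‖ ≤ M‖û − u‖ and ‖Q d‖ ≤ γ‖û − u‖, and let ξ ∈ H satisfy ‖ξ‖ ≤ ε. Then ‖B d + (I − B)ξ‖ ≤ (κ M + γ)‖û − u‖ + 2 b ε. -/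
/-! Split `B d = P (B d) + Q (B d)`. The observed part is `(P ∘ B) d`, of size at most `κ M ‖û - u‖`;
since `B` commutes with `Q`, the unobserved part is `B (Q d)`, and `‖B‖ ≤ 1` bounds it by
`γ ‖û - u‖`. The forcing term contributes at most `‖I - B‖ ‖ξ‖ ≤ b ε`. -/

namespace ContinuousLinearMap

variable {R M : Type*} [Ring R] [AddCommGroup M] [TopologicalSpace M] [IsTopologicalAddGroup M]
  [Module R M]

theorem apply_eq_comp_apply_add_apply_one_sub_apply (B P : M →L[R] M)
    (hB : B ∘L (1 - P) = (1 - P) ∘L B) (x : M) :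
    B x = (P ∘L B) x + B ((1 - P) x) := by
  have hx : B ((1 - P) x) = B x - P (B x) := by simpa using congr($hB x)
  rw [hx, comp_apply, add_sub_cancel]

end ContinuousLinearMap

theorem filter_one_step_error_estimate_general
    {H : Type*} [NormedAddCommGroup H] [InnerProductSpace ℝ H]
    (P Q : H →L[ℝ] H)
    (hQ : Q = 1 - P)
    (B : H →L[ℝ] H) (hBQ : B ∘L Q = Q ∘L B)
    (b κ : ℝ) (hBnorm : ‖B‖ ≤ 1) (hIB : ‖1 - B‖ ≤ b) (hPB : ‖P ∘L B‖ ≤ κ)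
    (uh u d ξ : H) (M γ ε : ℝ)
    (hd : ‖d‖ ≤ M * ‖uh - u‖) (hQd : ‖Q d‖ ≤ γ * ‖uh - u‖)
    (hξ : ‖ξ‖ ≤ ε) :
    ‖B d + (1 - B) ξ‖ ≤ (κ * M + γ) * ‖uh - u‖ + 2 * b * ε := by
  subst hQ
  have hbε : 0 ≤ b * ε := mul_nonneg ((norm_nonneg _).trans hIB) ((norm_nonneg _).trans hξ)
  have hobserved : ‖(P ∘L B) d‖ ≤ κ * (M * ‖uh - u‖) := (P ∘L B).le_of_opNorm_le_of_le hPB hd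
  have hunobserved : ‖B ((1 - P) d)‖ ≤ 1 * (γ * ‖uh - u‖) := B.le_of_opNorm_le_of_le hBnorm hQd
  have hforcing : ‖(1 - B) ξ‖ ≤ b * ε := (1 - B).le_of_opNorm_le_of_le hIB hξ
  rw [B.apply_eq_comp_apply_add_apply_one_sub_apply P hBQ d]
  calc ‖(P ∘L B) d + B ((1 - P) d) + (1 - B) ξ‖
      ≤ ‖(P ∘L B) d‖ + ‖B ((1 - P) d)‖ + ‖(1 - B) ξ‖ := norm_add₃_le
    _ ≤ (κ * M + γ) * ‖uh - u‖ + 2 * b * ε := by linarith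

/-- One-step error contraction estimate for the filter:
`‖B d + (I − B)ξ‖ ≤ (κM + γ)‖û − u‖ + 2bε`. -/
theorem filter_one_step_error_estimate
    {H : Type*} [NormedAddCommGroup H] [InnerProductSpace ℝ H] [CompleteSpace H]
    (P Q : H →L[ℝ] H) (hPidem : IsIdempotentElem P) (hPsa : IsSelfAdjoint P)
    (hQ : Q = 1 - P)
    (B : H →L[ℝ] H) (hBQ : B ∘L Q = Q ∘L B)
    (b κ : ℝ) (hBnorm : ‖B‖ ≤ 1) (hIB : ‖1 - B‖ ≤ b) (hPB : ‖P ∘L B‖ ≤ κ)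
    (uh u d ξ : H) (M γ ε : ℝ)
    (hd : ‖d‖ ≤ M * ‖uh - u‖) (hQd : ‖Q d‖ ≤ γ * ‖uh - u‖)
    (hξ : ‖ξ‖ ≤ ε) :
    ‖B d + (1 - B) ξ‖ ≤ (κ * M + γ) * ‖uh - u‖ + 2 * b * ε :=
  filter_one_step_error_estimate_general P Q hQ B hBQ b κ hBnorm hIB hPB uh u d ξ M γ ε hd hQd hξ
end

section
/- Let H be a real Hilbert space, P : H → H an orthogonal projection, Q = I − P, and Ψ : H → H a map. Let M ≥ 0, γ ∈ (0,1), κ ≥ 0, b ≥ 0, ε ≥ 0, r > 0, and set R = 2r and a = κM + γ; assume a < 1 and 2bε/(1−a) ≤ r. Let (u_j) satisfy u_{j+1} = Ψ(u_j) and assume that for every j and every v ∈ H with ‖v − u_j‖ ≤ R one has ‖Ψ(v) − Ψ(u_j)‖ ≤ M‖v − u_j‖ and ‖Q(Ψ(v) − Ψ(u_j))‖ ≤ γ‖v − u_j‖. Let (B_j) be bounded linear operators on H with B_j ∘ Q = Q ∘ B_j, ‖B_j‖ ≤ 1, ‖I − B_j‖ ≤ b, (I − B_j) ∘ Q = 0,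 and ‖P ∘ B_j‖ ≤ κ for all j. Let (ξ_j) satisfy ξ_j ∈ range(P) and ‖ξ_j‖ ≤ ε, let y_{j+1} = P(Ψ(u_j)) + ξ_{j+1}, and let (û_j) satisfy û_{j+1} = B_j(Ψ(û_j)) + (I − B_j)(y_{j+1}) with ‖û_0 − u_0‖ ≤ r. Then for all j ≥ 0, ‖û_j − u_j‖ ≤ aʲ r + 2bε·∑_{i=0}^{j−1} aⁱ, and consequently limsup_{j→∞} ‖û_j − u_j‖ ≤ 2bε/(1−a). -/
/-!
Write `e_j = ‖û_j − u_j‖` and `d = Ψ(û_j) − Ψ(u_j)`. Since `(I − B_j) Q = 0`, the data term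
`(I − B_j) P Ψ(u_j)` equals `(I − B_j) Ψ(u_j)`, so the error satisfies
`û_{j+1} − u_{j+1} = P B_j d + B_j Q d + (I − B_j) ξ_{j+1}`: the observed modes are damped by
`‖P B_j‖ ≤ κ` against the Lipschitz constant `M`, the unobserved ones are squeezed by `γ`.
Hence `e_{j+1} ≤ a e_j + bε` as long as `e_j ≤ R`, and the smallness condition on `2bε/(1 − a)`
keeps the resulting geometric bound below `R = 2r` for all `j`.
-/

open Filter Finset Topology

section ErrorRecursion

variable {a c r R : ℝ}

lemma mul_geom_sum_le_div (ha : 0 ≤ a) (ha1 : a < 1) (hc : 0 ≤ c) (n : ℕ) :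
    c * ∑ i ∈ range n, a ^ i ≤ c / (1 - a) := by
  have hsum : ∑ i ∈ range n, a ^ i ≤ 1 / (1 - a) := by
    have := geom_sum_Ico_le_of_lt_one (m := 0) (n := n) ha ha1
    rwa [← range_eq_Ico, pow_zero] at this
  simpa [div_eq_mul_one_div c] using mul_le_mul_of_nonneg_left hsum hc

lemma le_geom_bound_of_step {e : ℕ → ℝ} (ha : 0 ≤ a) (ha1 : a < 1) (hc : 0 ≤ c) (hr : 0 ≤ r)
    (hR : r + c / (1 - a) ≤ R) (h0 : e 0 ≤ r)
    (hstep : ∀ j, e j ≤ R → e (j + 1) ≤ a * e j + c) (j : ℕ) :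
    e j ≤ a ^ j * r + c * ∑ i ∈ range j, a ^ i := by
  induction j with
  | zero => simpa using h0
  | succ j ih =>
    have hjR : e j ≤ R :=
      calc e j ≤ a ^ j * r + c * ∑ i ∈ range j, a ^ i := ih
        _ ≤ 1 * r + c / (1 - a) := by
          gcongr
          · exact pow_le_one₀ ha ha1.le
          · exact mul_geom_sum_le_div ha ha1 hc j
        _ ≤ R := by linarith
    calc e (j + 1) ≤ a * e j + c := hstep j hjR
      _ ≤ a * (a ^ j * r + c * ∑ i ∈ range j, a ^ i) + c := by gcongr
      _ = a ^ (j + 1) * r + c * ∑ i ∈ range (j + 1), a ^ i := by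
        rw [geom_sum_succ, pow_succ]; ring

end ErrorRecursion

lemma limsup_le_of_le_of_tendsto {e f : ℕ → ℝ} {L : ℝ} (he : 0 ≤ e) (hef : e ≤ f)
    (hf : Tendsto f atTop (𝓝 L)) : limsup e atTop ≤ L :=
  (limsup_le_limsup (Eventually.of_forall hef) (isCoboundedUnder_le_of_le atTop he)
    hf.isBoundedUnder_le).trans_eq hf.limsup_eq

section FilterUpdate

variable {E : Type*} [NormedAddCommGroup E] [NormedSpace ℝ E] {P Q B : E →L[ℝ] E}

lemma filter_update_sub_eq (hQ : Q = 1 - P) (hBQ : B ∘L Q = Q ∘L B) (hIBQ : (1 - B) ∘L Q = 0)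
    (x z ξ : E) :
    B x + (1 - B) (P z + ξ) - z = P (B (x - z)) + B (Q (x - z)) + (1 - B) ξ := by
  have hQB : Q (B (x - z)) = B (Q (x - z)) := by
    simpa using congrArg (fun T : E →L[ℝ] E => T (x - z)) hBQ.symm
  have hdata : (1 - B) (Q z) = 0 := by
    simpa using congrArg (fun T : E →L[ℝ] E => T z) hIBQ
  subst hQ
  simp only [sub_apply, one_apply_eq_self, map_sub, map_add] at hQB hdata ⊢
  linear_combination (norm := abel) hQB - hdata

lemma norm_filter_update_sub_le {κ b : ℝ} (hQ : Q = 1 - P) (hBQ : B ∘L Q = Q ∘L B)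
    (hIBQ : (1 - B) ∘L Q = 0) (hBnorm : ‖B‖ ≤ 1) (hIBnorm : ‖1 - B‖ ≤ b) (hPB : ‖P ∘L B‖ ≤ κ)
    (x z ξ : E) :
    ‖B x + (1 - B) (P z + ξ) - z‖ ≤ κ * ‖x - z‖ + ‖Q (x - z)‖ + b * ‖ξ‖ := by
  rw [filter_update_sub_eq hQ hBQ hIBQ]
  have hobs : ‖P (B (x - z))‖ ≤ κ * ‖x - z‖ :=
    (P ∘L B).le_of_opNorm_le hPB (x - z)
  have hunobs : ‖B (Q (x - z))‖ ≤ ‖Q (x - z)‖ := by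
    simpa using B.le_of_opNorm_le hBnorm (Q (x - z))
  have hnoise : ‖(1 - B) ξ‖ ≤ b * ‖ξ‖ := (1 - B).le_of_opNorm_le hIBnorm ξ
  calc _ ≤ ‖P (B (x - z))‖ + ‖B (Q (x - z))‖ + ‖(1 - B) ξ‖ := norm_add₃_le
    _ ≤ _ := by gcongr

end FilterUpdate

theorem filter_accuracy_partial_observations_general
    {H : Type*} [NormedAddCommGroup H] [InnerProductSpace ℝ H]
    (P Q : H →L[ℝ] H)
    (hQ : Q = 1 - P)
    (Ψ : H → H) (M γ κ b ε r R a : ℝ)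
    (hM : 0 ≤ M) (hγ0 : 0 < γ) (hκ : 0 ≤ κ) (hb : 0 ≤ b)
    (hε : 0 ≤ ε) (hr : 0 < r) (hR : R = 2 * r) (ha : a = κ * M + γ)
    (ha1 : a < 1) (hsmall : 2 * b * ε / (1 - a) ≤ r)
    (u : ℕ → H) (hu : ∀ j, u (j + 1) = Ψ (u j))
    (hLip : ∀ j, ∀ v : H, ‖v - u j‖ ≤ R → ‖Ψ v - Ψ (u j)‖ ≤ M * ‖v - u j‖)
    (hSqueeze : ∀ j, ∀ v : H, ‖v - u j‖ ≤ R →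
      ‖Q (Ψ v - Ψ (u j))‖ ≤ γ * ‖v - u j‖)
    (B : ℕ → H →L[ℝ] H)
    (hBQ : ∀ j, B j ∘L Q = Q ∘L B j)
    (hBnorm : ∀ j, ‖B j‖ ≤ 1)
    (hIBnorm : ∀ j, ‖1 - B j‖ ≤ b)
    (hIBQ : ∀ j, (1 - B j) ∘L Q = 0)
    (hPB : ∀ j, ‖P ∘L B j‖ ≤ κ)
    (ξ : ℕ → H) (hξ : ∀ j, ‖ξ j‖ ≤ ε)
    (y : ℕ → H) (hy : ∀ j, y (j + 1) = P (Ψ (u j)) + ξ (j + 1))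
    (uh : ℕ → H)
    (huh : ∀ j, uh (j + 1) = (B j) (Ψ (uh j)) + (1 - B j) (y (j + 1)))
    (h0 : ‖uh 0 - u 0‖ ≤ r) :
    (∀ j, ‖uh j - u j‖ ≤ a ^ j * r + 2 * b * ε * ∑ i ∈ Finset.range j, a ^ i) ∧
    Filter.limsup (fun j => ‖uh j - u j‖) Filter.atTop ≤ 2 * b * ε / (1 - a) := by
  have ha0 : 0 ≤ a := by rw [ha]; positivity
  have hbε : 0 ≤ 2 * b * ε := by positivity
  have hstep (j : ℕ) (hj : ‖uh j - u j‖ ≤ R) :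
      ‖uh (j + 1) - u (j + 1)‖ ≤ a * ‖uh j - u j‖ + 2 * b * ε := by
    rw [huh, hy, hu]
    calc _ ≤ κ * ‖Ψ (uh j) - Ψ (u j)‖ + ‖Q (Ψ (uh j) - Ψ (u j))‖ + b * ‖ξ (j + 1)‖ :=
          norm_filter_update_sub_le hQ (hBQ j) (hIBQ j) (hBnorm j) (hIBnorm j) (hPB j) _ _ _
      _ ≤ κ * (M * ‖uh j - u j‖) + γ * ‖uh j - u j‖ + b * ε := by
          gcongr
          exacts [hLip j _ hj, hSqueeze j _ hj, hξ _]
      _ ≤ a * ‖uh j - u j‖ + 2 * b * ε := by rw [ha]; nlinarith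
  have hbound := le_geom_bound_of_step ha0 ha1 hbε hr.le (by rw [hR]; linarith) h0 hstep
  refine ⟨hbound, limsup_le_of_le_of_tendsto (fun j => norm_nonneg _)
    (fun j => (hbound j).trans (add_le_add_right (mul_geom_sum_le_div ha0 ha1 hbε j) _)) ?_⟩
  simpa using ((tendsto_pow_atTop_nhds_zero_of_lt_one ha0 ha1).mul_const r).add_const
    (2 * b * ε / (1 - a))

/-- Filter accuracy theorem for partial observations: under the Lipschitz and
squeezing properties of the model map, variance inflation `‖P ∘ B_j‖ ≤ κ` with
`a = κM + γ < 1`, and noisy observations of the low modes with noise bound `ε`,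
the filter error satisfies `‖û_j − u_j‖ ≤ aʲ r + 2bε ∑_{i<j} aⁱ` and hence
`limsup ‖û_j − u_j‖ ≤ 2bε/(1−a)`. -/
theorem filter_accuracy_partial_observations
    {H : Type*} [NormedAddCommGroup H] [InnerProductSpace ℝ H] [CompleteSpace H]
    (P Q : H →L[ℝ] H) (hPidem : IsIdempotentElem P) (hPsa : IsSelfAdjoint P)
    (hQ : Q = 1 - P)
    (Ψ : H → H) (M γ κ b ε r R a : ℝ)
    (hM : 0 ≤ M) (hγ0 : 0 < γ) (hγ1 : γ < 1) (hκ : 0 ≤ κ) (hb : 0 ≤ b)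
    (hε : 0 ≤ ε) (hr : 0 < r) (hR : R = 2 * r) (ha : a = κ * M + γ)
    (ha1 : a < 1) (hsmall : 2 * b * ε / (1 - a) ≤ r)
    (u : ℕ → H) (hu : ∀ j, u (j + 1) = Ψ (u j))
    (hLip : ∀ j, ∀ v : H, ‖v - u j‖ ≤ R → ‖Ψ v - Ψ (u j)‖ ≤ M * ‖v - u j‖)
    (hSqueeze : ∀ j, ∀ v : H, ‖v - u j‖ ≤ R →
      ‖Q (Ψ v - Ψ (u j))‖ ≤ γ * ‖v - u j‖)
    (B : ℕ → H →L[ℝ] H)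
    (hBQ : ∀ j, B j ∘L Q = Q ∘L B j)
    (hBnorm : ∀ j, ‖B j‖ ≤ 1)
    (hIBnorm : ∀ j, ‖1 - B j‖ ≤ b)
    (hIBQ : ∀ j, (1 - B j) ∘L Q = 0)
    (hPB : ∀ j, ‖P ∘L B j‖ ≤ κ)
    (ξ : ℕ → H) (hξP : ∀ j, P (ξ j) = ξ j) (hξ : ∀ j, ‖ξ j‖ ≤ ε)
    (y : ℕ → H) (hy : ∀ j, y (j + 1) = P (Ψ (u j)) + ξ (j + 1))
    (uh : ℕ → H)
    (huh : ∀ j, uh (j + 1) = (B j) (Ψ (uh j)) + (1 - B j) (y (j + 1)))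
    (h0 : ‖uh 0 - u 0‖ ≤ r) :
    (∀ j, ‖uh j - u j‖ ≤ a ^ j * r + 2 * b * ε * ∑ i ∈ Finset.range j, a ^ i) ∧
    Filter.limsup (fun j => ‖uh j - u j‖) Filter.atTop ≤ 2 * b * ε / (1 - a) :=
  filter_accuracy_partial_observations_general P Q hQ Ψ M γ κ b ε r R a hM hγ0 hκ hb hε hr hR ha ha1
    hsmall u hu hLip hSqueeze B hBQ hBnorm hIBnorm hIBQ hPB ξ hξ y hy uh huh h0
end

section
/- Let H be a real Hilbert space, P : H → H an orthogonal projection, Q = I − P, and Ψ : H → H a map satisfying, for all u, v ∈ H, ‖Ψ(u) − Ψ(v)‖ ≤ M‖u − v‖ and ‖Q(Ψ(u) − Ψ(v))‖ ≤ γ‖u − v‖, where M ≥ 0 and γ ∈ (0,1). Let (B_j) be bounded linear operators on H with B_j ∘ Q = Q ∘ B_j, ‖B_j‖ ≤ 1, and ‖P ∘ B_j‖ ≤ κ for all j, and set a = κM + γ; assume a < 1. Let (y_j) be any sequence in H and let (û_j) and (ŵ_j) satisfy û_{j+1} = B_j(Ψ(û_j)) + (I − B_j)(y_{j+1}) and ŵ_{j+1}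 = B_j(Ψ(ŵ_j)) + (I − B_j)(y_{j+1}). Then for all j ≥ 0, ‖û_j − ŵ_j‖ ≤ aʲ ‖û_0 − ŵ_0‖. -/
/-!
The difference `dⱼ = ûⱼ - ŵⱼ` satisfies `dⱼ₊₁ = Bⱼ (Ψ ûⱼ - Ψ ŵⱼ)`, since the data terms cancel.
Split `dⱼ₊₁` into its `P`- and `Q`-parts: the `P`-part is at most `κ M ‖dⱼ‖` by the Lipschitz bound,
and, because `Bⱼ` commutes with `Q`, the `Q`-part is `Bⱼ Q (Ψ ûⱼ - Ψ ŵⱼ)`, of norm at most `γ ‖dⱼ‖`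
by squeezing. Hence `‖dⱼ₊₁‖ ≤ a ‖dⱼ‖`, and the bound follows by iteration.
-/

theorem ContinuousLinearMap.norm_apply_le_of_comp_one_sub_comm {𝕜 E : Type*}
    [NontriviallyNormedField 𝕜] [SeminormedAddCommGroup E] [NormedSpace 𝕜 E]
    {P B : E →L[𝕜] E} {κ M γ r : ℝ} (hBQ : B ∘L (1 - P) = (1 - P) ∘L B) (hB : ‖B‖ ≤ 1)
    (hPB : ‖P ∘L B‖ ≤ κ) {e : E} (he : ‖e‖ ≤ M * r) (hQe : ‖(1 - P) e‖ ≤ γ * r) :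
    ‖B e‖ ≤ (κ * M + γ) * r := by
  have hQB : (1 - P) (B e) = B ((1 - P) e) := (congrArg (· e) hBQ).symm
  calc ‖B e‖ = ‖(P ∘L B) e + (1 - P) (B e)‖ := by simp
    _ ≤ ‖(P ∘L B) e‖ + ‖B ((1 - P) e)‖ := hQB ▸ norm_add_le _ _
    _ ≤ κ * (M * r) + 1 * (γ * r) :=
      add_le_add ((P ∘L B).le_of_opNorm_le_of_le hPB he) (B.le_of_opNorm_le_of_le hB hQe)
    _ = (κ * M + γ) * r := by ring

theorem filter_stability_general
    {H : Type*} [NormedAddCommGroup H] [InnerProductSpace ℝ H]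
    (P Q : H →L[ℝ] H)
    (hQ : Q = 1 - P)
    (Ψ : H → H) (M γ κ a : ℝ) (hM : 0 ≤ M) (hγ0 : 0 < γ)
    (hLip : ∀ u v : H, ‖Ψ u - Ψ v‖ ≤ M * ‖u - v‖)
    (hSqueeze : ∀ u v : H, ‖Q (Ψ u - Ψ v)‖ ≤ γ * ‖u - v‖)
    (B : ℕ → H →L[ℝ] H)
    (hBQ : ∀ j, B j ∘L Q = Q ∘L B j)
    (hBnorm : ∀ j, ‖B j‖ ≤ 1)
    (hPB : ∀ j, ‖P ∘L B j‖ ≤ κ)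
    (ha : a = κ * M + γ)
    (y : ℕ → H)
    (uh wh : ℕ → H)
    (huh : ∀ j, uh (j + 1) = (B j) (Ψ (uh j)) + (1 - B j) (y (j + 1)))
    (hwh : ∀ j, wh (j + 1) = (B j) (Ψ (wh j)) + (1 - B j) (y (j + 1))) :
    ∀ j, ‖uh j - wh j‖ ≤ a ^ j * ‖uh 0 - wh 0‖ := by
  subst hQ ha
  have hκ : 0 ≤ κ := (norm_nonneg _).trans (hPB 0)
  intro j
  refine le_geom (u := fun j ↦ ‖uh j - wh j‖) (by positivity) j fun k _ ↦ ?_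
  have hdiff : uh (k + 1) - wh (k + 1) = B k (Ψ (uh k) - Ψ (wh k)) := by
    rw [huh, hwh, add_sub_add_right_eq_sub, map_sub]
  rw [hdiff]
  exact ContinuousLinearMap.norm_apply_le_of_comp_one_sub_comm (hBQ k) (hBnorm k) (hPB k)
    (hLip _ _) (hSqueeze _ _)

/-- Filter stability theorem: two filters driven by the same data converge
geometrically to each other: `‖û_j − ŵ_j‖ ≤ aʲ ‖û_0 − ŵ_0‖` with `a = κM + γ`. -/
theorem filter_stability
    {H : Type*} [NormedAddCommGroup H] [InnerProductSpace ℝ H] [CompleteSpace H]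
    (P Q : H →L[ℝ] H) (hPidem : IsIdempotentElem P) (hPsa : IsSelfAdjoint P)
    (hQ : Q = 1 - P)
    (Ψ : H → H) (M γ κ a : ℝ) (hM : 0 ≤ M) (hγ0 : 0 < γ) (hγ1 : γ < 1)
    (hLip : ∀ u v : H, ‖Ψ u - Ψ v‖ ≤ M * ‖u - v‖)
    (hSqueeze : ∀ u v : H, ‖Q (Ψ u - Ψ v)‖ ≤ γ * ‖u - v‖)
    (B : ℕ → H →L[ℝ] H)
    (hBQ : ∀ j, B j ∘L Q = Q ∘L B j)
    (hBnorm : ∀ j, ‖B j‖ ≤ 1)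
    (hPB : ∀ j, ‖P ∘L B j‖ ≤ κ)
    (ha : a = κ * M + γ) (ha1 : a < 1)
    (y : ℕ → H)
    (uh wh : ℕ → H)
    (huh : ∀ j, uh (j + 1) = (B j) (Ψ (uh j)) + (1 - B j) (y (j + 1)))
    (hwh : ∀ j, wh (j + 1) = (B j) (Ψ (wh j)) + (1 - B j) (y (j + 1))) :
    ∀ j, ‖uh j - wh j‖ ≤ a ^ j * ‖uh 0 - wh 0‖ :=
  filter_stability_general P Q hQ Ψ M γ κ a hM hγ0 hLip hSqueeze B hBQ hBnorm hPB ha y uh wh huh hwh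
end

section
/- Let H be a real Hilbert space, P : H → H an orthogonal projection, Q = I − P, and Ψ : H → H a map. Let M ≥ 0, γ ∈ (0,1), κ ≥ 0, b ≥ 0, ε ≥ 0, r > 0, and set R = 2r and a = κM + γ; assume a < 1 and 2bε/(1−a) ≤ r. Let (u_j) satisfy u_{j+1} = Ψ(u_j) and assume that for every j and every v ∈ H with ‖v − u_j‖ ≤ R one has ‖Ψ(v) − Ψ(u_j)‖ ≤ M‖v − u_j‖ and ‖Q(Ψ(v) − Ψ(u_j))‖ ≤ γ‖v − u_j‖. Let (B_j) be bounded linear operators on H with B_j ∘ Q = Q ∘ B_j, ‖B_j‖ ≤ 1, ‖I − B_j‖ ≤ b, and ‖P ∘ B_j‖ ≤ κ for all j. Let (ξ_j) be a sequence in H with ‖ξ_j‖ ≤ ε, let y_{j+1} = Ψ(u_j) + ξ_{j+1}, and let (û_j) satisfy û_{j+1} = B_j(Ψ(û_j)) + (I − B_j)(y_{j+1}) with ‖û_0 − u_0‖ ≤ r. Then for all j ≥ 0, ‖û_j − u_j‖ ≤ aʲ r + 2bε·∑_{i=0}^{j−1} aⁱ, and consequently limsup_{j→∞} ‖û_j −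 u_j‖ ≤ 2bε/(1−a). -/
/-!
Writing `eⱼ = ûⱼ - uⱼ`, one filter step gives
`eⱼ₊₁ = Bⱼ w + (I - Bⱼ) ξⱼ₊₁` with `w = Ψ ûⱼ - Ψ uⱼ`. Splitting
`Bⱼ w = (P Bⱼ) w + Bⱼ (Q w)` (this uses `Bⱼ Q = Q Bⱼ`) bounds it by `(κM + γ) ‖eⱼ‖`,
so `‖eⱼ₊₁‖ ≤ a ‖eⱼ‖ + bε` as long as `‖eⱼ‖ ≤ R`. Unrolling this recursion gives the
geometric bound, which never exceeds `r + 2bε/(1 - a) ≤ 2r = R`, so the local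
Lipschitz and squeezing estimates stay applicable along the whole induction; the
bound tends to `2bε/(1 - a)`.
-/

open Filter Finset Topology

section FilterStep

variable {𝕜 E : Type*} [NontriviallyNormedField 𝕜] [SeminormedAddCommGroup E]
  [NormedSpace 𝕜 E]

theorem norm_apply_le_of_comp_one_sub_comm {P B : E →L[𝕜] E} {κ : ℝ}
    (hBQ : B ∘L (1 - P) = (1 - P) ∘L B) (hB : ‖B‖ ≤ 1) (hPB : ‖P ∘L B‖ ≤ κ) (w : E) :
    ‖B w‖ ≤ κ * ‖w‖ + ‖(1 - P) w‖ := by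
  have hsplit : B w = (P ∘L B) w + B ((1 - P) w) := by
    rw [← ContinuousLinearMap.comp_apply B, hBQ]
    simp
  calc ‖B w‖ ≤ ‖(P ∘L B) w‖ + ‖B ((1 - P) w)‖ := hsplit ▸ norm_add_le _ _
    _ ≤ κ * ‖w‖ + 1 * ‖(1 - P) w‖ := by
      gcongr
      · exact (P ∘L B).le_of_opNorm_le hPB w
      · exact B.le_of_opNorm_le hB _
    _ = κ * ‖w‖ + ‖(1 - P) w‖ := by rw [one_mul]

theorem filter_update_sub (B : E →L[𝕜] E) (p q ξ : E) :
    B p + (1 - B) (q + ξ) - q = B (p - q) + (1 - B) ξ := by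
  simp only [map_add, map_sub, sub_apply, one_apply_eq_self]
  abel

theorem norm_filter_update_sub_le_s8 {P B : E →L[𝕜] E} {p q ξ : E} {κ M γ b ε δ : ℝ}
    (hBQ : B ∘L (1 - P) = (1 - P) ∘L B) (hB : ‖B‖ ≤ 1) (hPB : ‖P ∘L B‖ ≤ κ)
    (hIB : ‖1 - B‖ ≤ b) (hξ : ‖ξ‖ ≤ ε) (hκ : 0 ≤ κ)
    (hLip : ‖p - q‖ ≤ M * δ) (hSqueeze : ‖(1 - P) (p - q)‖ ≤ γ * δ) :
    ‖B p + (1 - B) (q + ξ) - q‖ ≤ (κ * M + γ) * δ + b * ε := by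
  rw [filter_update_sub]
  calc ‖B (p - q) + (1 - B) ξ‖ ≤ ‖B (p - q)‖ + ‖(1 - B) ξ‖ := norm_add_le _ _
    _ ≤ (κ * ‖p - q‖ + ‖(1 - P) (p - q)‖) + b * ε := by
      gcongr
      · exact norm_apply_le_of_comp_one_sub_comm hBQ hB hPB _
      · exact (1 - B).le_of_opNorm_le_of_le hIB hξ
    _ ≤ (κ * (M * δ) + γ * δ) + b * ε := by gcongr
    _ = (κ * M + γ) * δ + b * ε := by ring

end FilterStep

section GeomBound

/-- The solution of `eⱼ₊₁ = a eⱼ + c`, `e₀ = r`. -/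
def geomBound (a r c : ℝ) (j : ℕ) : ℝ :=
  a ^ j * r + c * ∑ i ∈ range j, a ^ i

variable {a r c : ℝ}

theorem geomBound_succ (j : ℕ) : geomBound a r c (j + 1) = a * geomBound a r c j + c := by
  simp only [geomBound, pow_succ, geom_sum_succ]
  ring

theorem le_geomBound_of_step {e : ℕ → ℝ} (ha : 0 ≤ a) (h0 : e 0 ≤ r)
    (hstep : ∀ j, e j ≤ geomBound a r c j → e (j + 1) ≤ a * e j + c) :
    ∀ j, e j ≤ geomBound a r c j
  | 0 => by simpa [geomBound] using h0
  | j + 1 => by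
    have ih := le_geomBound_of_step ha h0 hstep j
    rw [geomBound_succ]
    exact (hstep j ih).trans (by gcongr)

theorem geomBound_le (ha0 : 0 ≤ a) (ha1 : a < 1) (hr : 0 ≤ r) (hc : 0 ≤ c) (j : ℕ) :
    geomBound a r c j ≤ r + c / (1 - a) := by
  have hpow : a ^ j * r ≤ r := mul_le_of_le_one_left hr (pow_le_one₀ ha0 ha1.le)
  have hsum : ∑ i ∈ range j, a ^ i ≤ (1 - a)⁻¹ :=
    sum_le_hasSum _ (fun i _ => pow_nonneg ha0 i) (hasSum_geometric_of_lt_one ha0 ha1)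
  calc geomBound a r c j ≤ r + c * (1 - a)⁻¹ := by unfold geomBound; gcongr
    _ = r + c / (1 - a) := by rw [div_eq_mul_inv]

theorem tendsto_geomBound (ha0 : 0 ≤ a) (ha1 : a < 1) :
    Tendsto (geomBound a r c) atTop (𝓝 (c / (1 - a))) := by
  have hpow := (tendsto_pow_atTop_nhds_zero_of_lt_one ha0 ha1).mul_const r
  have hsum := ((hasSum_geometric_of_lt_one ha0 ha1).tendsto_sum_nat).const_mul c
  rw [show c / (1 - a) = 0 * r + c * (1 - a)⁻¹ by ring]
  exact hpow.add hsum

theorem limsup_le_of_le_geomBound {e : ℕ → ℝ} (ha0 : 0 ≤ a) (ha1 : a < 1)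
    (he0 : ∀ j, 0 ≤ e j) (he : ∀ j, e j ≤ geomBound a r c j) :
    limsup e atTop ≤ c / (1 - a) := by
  have hlim := tendsto_geomBound (r := r) (c := c) ha0 ha1
  calc limsup e atTop ≤ limsup (geomBound a r c) atTop :=
        limsup_le_limsup (.of_forall he) (isBoundedUnder_of ⟨0, he0⟩).isCoboundedUnder_le
          hlim.isBoundedUnder_le
    _ = c / (1 - a) := hlim.limsup_eq

end GeomBound

theorem filter_accuracy_complete_observations_general
    {H : Type*} [NormedAddCommGroup H] [InnerProductSpace ℝ H]
    (P Q : H →L[ℝ] H)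
    (hQ : Q = 1 - P)
    (Ψ : H → H) (M γ κ b ε r R a : ℝ)
    (hM : 0 ≤ M) (hγ0 : 0 < γ) (hκ : 0 ≤ κ) (hb : 0 ≤ b)
    (hε : 0 ≤ ε) (hr : 0 < r) (hR : R = 2 * r) (ha : a = κ * M + γ)
    (ha1 : a < 1) (hsmall : 2 * b * ε / (1 - a) ≤ r)
    (u : ℕ → H) (hu : ∀ j, u (j + 1) = Ψ (u j))
    (hLip : ∀ j, ∀ v : H, ‖v - u j‖ ≤ R → ‖Ψ v - Ψ (u j)‖ ≤ M * ‖v - u j‖)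
    (hSqueeze : ∀ j, ∀ v : H, ‖v - u j‖ ≤ R →
      ‖Q (Ψ v - Ψ (u j))‖ ≤ γ * ‖v - u j‖)
    (B : ℕ → H →L[ℝ] H)
    (hBQ : ∀ j, B j ∘L Q = Q ∘L B j)
    (hBnorm : ∀ j, ‖B j‖ ≤ 1)
    (hIBnorm : ∀ j, ‖1 - B j‖ ≤ b)
    (hPB : ∀ j, ‖P ∘L B j‖ ≤ κ)
    (ξ : ℕ → H) (hξ : ∀ j, ‖ξ j‖ ≤ ε)
    (y : ℕ → H) (hy : ∀ j, y (j + 1) = Ψ (u j) + ξ (j + 1))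
    (uh : ℕ → H)
    (huh : ∀ j, uh (j + 1) = (B j) (Ψ (uh j)) + (1 - B j) (y (j + 1)))
    (h0 : ‖uh 0 - u 0‖ ≤ r) :
    (∀ j, ‖uh j - u j‖ ≤ a ^ j * r + 2 * b * ε * ∑ i ∈ Finset.range j, a ^ i) ∧
    Filter.limsup (fun j => ‖uh j - u j‖) Filter.atTop ≤ 2 * b * ε / (1 - a) := by
  subst hQ hR ha
  have ha0 : 0 ≤ κ * M + γ := by positivity
  have hbound : ∀ j, ‖uh j - u j‖ ≤ geomBound (κ * M + γ) r (2 * b * ε) j := by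
    refine le_geomBound_of_step ha0 h0 fun j hj => ?_
    have hjR : ‖uh j - u j‖ ≤ 2 * r :=
      (hj.trans (geomBound_le ha0 ha1 hr.le (by positivity) j)).trans (by linarith)
    rw [huh, hy, hu]
    refine (norm_filter_update_sub_le_s8 (hBQ j) (hBnorm j) (hPB j) (hIBnorm j) (hξ _) hκ
      (hLip j _ hjR) (hSqueeze j _ hjR)).trans ?_
    nlinarith [mul_nonneg hb hε]
  exact ⟨hbound, limsup_le_of_le_geomBound ha0 ha1 (fun _ => norm_nonneg _) hbound⟩

/-- Filter accuracy theorem for complete observations: with noisy observations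
of the complete state and `a = κM + γ < 1`, the filter error satisfies
`‖û_j − u_j‖ ≤ aʲ r + 2bε ∑_{i<j} aⁱ` and hence
`limsup ‖û_j − u_j‖ ≤ 2bε/(1−a)`. -/
theorem filter_accuracy_complete_observations
    {H : Type*} [NormedAddCommGroup H] [InnerProductSpace ℝ H] [CompleteSpace H]
    (P Q : H →L[ℝ] H) (hPidem : IsIdempotentElem P) (hPsa : IsSelfAdjoint P)
    (hQ : Q = 1 - P)
    (Ψ : H → H) (M γ κ b ε r R a : ℝ)
    (hM : 0 ≤ M) (hγ0 : 0 < γ) (hγ1 : γ < 1) (hκ : 0 ≤ κ) (hb : 0 ≤ b)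
    (hε : 0 ≤ ε) (hr : 0 < r) (hR : R = 2 * r) (ha : a = κ * M + γ)
    (ha1 : a < 1) (hsmall : 2 * b * ε / (1 - a) ≤ r)
    (u : ℕ → H) (hu : ∀ j, u (j + 1) = Ψ (u j))
    (hLip : ∀ j, ∀ v : H, ‖v - u j‖ ≤ R → ‖Ψ v - Ψ (u j)‖ ≤ M * ‖v - u j‖)
    (hSqueeze : ∀ j, ∀ v : H, ‖v - u j‖ ≤ R →
      ‖Q (Ψ v - Ψ (u j))‖ ≤ γ * ‖v - u j‖)
    (B : ℕ → H →L[ℝ] H)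
    (hBQ : ∀ j, B j ∘L Q = Q ∘L B j)
    (hBnorm : ∀ j, ‖B j‖ ≤ 1)
    (hIBnorm : ∀ j, ‖1 - B j‖ ≤ b)
    (hPB : ∀ j, ‖P ∘L B j‖ ≤ κ)
    (ξ : ℕ → H) (hξ : ∀ j, ‖ξ j‖ ≤ ε)
    (y : ℕ → H) (hy : ∀ j, y (j + 1) = Ψ (u j) + ξ (j + 1))
    (uh : ℕ → H)
    (huh : ∀ j, uh (j + 1) = (B j) (Ψ (uh j)) + (1 - B j) (y (j + 1)))
    (h0 : ‖uh 0 - u 0‖ ≤ r) :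
    (∀ j, ‖uh j - u j‖ ≤ a ^ j * r + 2 * b * ε * ∑ i ∈ Finset.range j, a ^ i) ∧
    Filter.limsup (fun j => ‖uh j - u j‖) Filter.atTop ≤ 2 * b * ε / (1 - a) :=
  filter_accuracy_complete_observations_general P Q hQ Ψ M γ κ b ε r R a hM hγ0 hκ hb hε hr hR ha
    ha1 hsmall u hu hLip hSqueeze B hBQ hBnorm hIBnorm hPB ξ hξ y hy uh huh h0
end
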